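/- arXiv:2210.08684 — 2 statements merged into one kernel-verified Lean document; each statement's English description precedes it below -/
import Mathlib

section
/- Let n ≥ 1 and let λ ∈ ℝⁿ be weakly decreasing with λ_i − λ_{i+1} ≤ 1 for all 1 ≤ i ≤ n−1, and let m = (λ₁ + ⋯ + λ_n)/n be its mean. Then for every weakly decreasing z ∈ ℝⁿ one has ‖(λ − ρ) − m·𝟙‖ ≤ ‖(λ − ρ) − z‖ in the Euclidean norm; that is, the constant vector m·𝟙 is a nearest point to λ − ρ in the closed convex cone of weakly decreasing vectors. -/
/-!
The gap condition `λ_i - λ_{i+1} ≤ 1` together with `ρ_i - ρ_{i+1} = 1` makes `x = λ - ρ`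
increasing, and `∑ ρ_i = 0` makes the mean of `x` equal to `m`. For a decreasing `z`,
Chebyshev's sum inequality gives `∑ (x_i - m) z_i ≤ 0`, i.e. `⟪x - m𝟙, m𝟙 - z⟫ ≥ 0`, and
Pythagoras then yields `‖x - m𝟙‖ ≤ ‖x - z‖`.
-/

/-- The constant vector `m·𝟙` in Euclidean space. -/
noncomputable def constVec (n : ℕ) (m : ℝ) : EuclideanSpace ℝ (Fin n) := WithLp.toLp 2 (fun _ => m)

/-- The Weyl vector `ρ` of `gl(n)`, with `i`-th coordinate `(n + 1 - 2i)/2`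
(in 1-indexed notation). -/
noncomputable def rhoVec (n : ℕ) : EuclideanSpace ℝ (Fin n) :=
  WithLp.toLp 2 (fun i => ((n : ℝ) + 1 - 2 * ((i : ℕ) + 1)) / 2)

theorem Fin.monotone_of_le_of_val_add_one_eq {α : Type*} [Preorder α] {n : ℕ} {f : Fin n → α}
    (h : ∀ i j : Fin n, (i : ℕ) + 1 = j → f i ≤ f j) : Monotone f := by
  cases n with
  | zero => exact fun i => i.elim0
  | succ n => exact Fin.monotone_iff_le_succ.2 fun i => h _ _ rfl

theorem norm_sub_le_norm_sub_of_inner_nonneg {F : Type*} [NormedAddCommGroup F]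
    [InnerProductSpace ℝ F] {x y z : F} (h : 0 ≤ inner ℝ (x - y) (y - z)) :
    ‖x - y‖ ≤ ‖x - z‖ := by
  have hsq := norm_add_sq_real (x - y) (y - z)
  rw [sub_add_sub_cancel] at hsq
  refine (pow_le_pow_iff_left₀ (norm_nonneg _) (norm_nonneg _) two_ne_zero).1 ?_
  nlinarith [sq_nonneg ‖y - z‖]

section Mean

variable {ι : Type*} [Fintype ι]

theorem sum_sub_mean_eq_zero (f : ι → ℝ) :
    ∑ i, (f i - (∑ j, f j) / Fintype.card ι) = 0 := by
  rcases isEmpty_or_nonempty ι with hι | hι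
  · simp
  · rw [Finset.sum_sub_distrib, Finset.sum_const, Finset.card_univ, nsmul_eq_mul,
      mul_div_cancel₀ _ (by positivity), sub_self]

theorem Antivary.sum_sub_mean_mul_nonpos {f g : ι → ℝ} (h : Antivary f g) :
    ∑ i, (f i - (∑ j, f j) / Fintype.card ι) * g i ≤ 0 := by
  rcases isEmpty_or_nonempty ι with hι | hι
  · simp
  have hcard : (0 : ℝ) < Fintype.card ι := by positivity
  have hcheb := h.card_mul_sum_le_sum_mul_sum
  calc ∑ i, (f i - (∑ j, f j) / Fintype.card ι) * g i
      = (Fintype.card ι * ∑ i, f i * g i - (∑ i, f i) * ∑ i, g i) / Fintype.card ι := by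
        simp only [sub_mul, Finset.sum_sub_distrib, ← Finset.mul_sum]
        field_simp
    _ ≤ 0 := div_nonpos_of_nonpos_of_nonneg (sub_nonpos.2 hcheb) hcard.le

theorem norm_sub_mean_le_of_monotone_of_antitone [LinearOrder ι] {x z : EuclideanSpace ℝ ι}
    (hx : Monotone x) (hz : Antitone z) :
    ‖x - WithLp.toLp 2 (fun _ => (∑ i, x i) / Fintype.card ι)‖ ≤ ‖x - z‖ := by
  set m := (∑ i, x i) / Fintype.card ι
  refine norm_sub_le_norm_sub_of_inner_nonneg ?_
  have hinner : inner ℝ (x - WithLp.toLp 2 (fun _ => m)) (WithLp.toLp 2 (fun _ => m) - z)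
      = m * ∑ i, (x i - m) - ∑ i, (x i - m) * z i := by
    simp only [PiLp.inner_apply, PiLp.sub_apply, RCLike.inner_apply, conj_trivial,
      Finset.mul_sum, ← Finset.sum_sub_distrib]
    exact Finset.sum_congr rfl fun i _ => by ring
  rw [hinner, sum_sub_mean_eq_zero, mul_zero, zero_sub, neg_nonneg]
  exact (hx.antivary hz).sum_sub_mean_mul_nonpos

end Mean

theorem rhoVec_rev (n : ℕ) (i : Fin n) : rhoVec n i.rev = -rhoVec n i := by
  simp only [rhoVec, Fin.val_rev]
  rw [Nat.cast_sub i.isLt]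
  push_cast
  ring

theorem sum_rhoVec (n : ℕ) : ∑ i, rhoVec n i = 0 := by
  have h := Equiv.sum_comp Fin.revPerm (rhoVec n ·)
  simp only [Fin.revPerm_apply, rhoVec_rev, Finset.sum_neg_distrib] at h
  linarith

theorem rhoVec_sub_rhoVec_of_val_add_one_eq {n : ℕ} {i j : Fin n} (h : (i : ℕ) + 1 = j) :
    rhoVec n i - rhoVec n j = 1 := by
  simp only [rhoVec, ← h]
  push_cast
  ring

theorem mean_is_nearest_decreasing_for_lambda_sub_rho_general
    (n : ℕ) (lam : EuclideanSpace ℝ (Fin n))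
    (hgap : ∀ i j : Fin n, (i : ℕ) + 1 = (j : ℕ) → lam i - lam j ≤ 1)
    (m : ℝ) (hm : m = (∑ i, lam i) / n)
    (z : EuclideanSpace ℝ (Fin n)) (hz : ∀ i j : Fin n, i ≤ j → z j ≤ z i) :
    ‖(lam - rhoVec n) - constVec n m‖ ≤ ‖(lam - rhoVec n) - z‖ := by
  have hmono : Monotone (lam - rhoVec n) := Fin.monotone_of_le_of_val_add_one_eq fun i j hij => by
    have hrho := rhoVec_sub_rhoVec_of_val_add_one_eq hij
    simp only [PiLp.sub_apply]
    linarith [hgap i j hij]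
  have hmean : m = (∑ i, (lam - rhoVec n) i) / Fintype.card (Fin n) := by
    simp only [hm, PiLp.sub_apply, Finset.sum_sub_distrib, sum_rhoVec, sub_zero, Fintype.card_fin]
  rw [hmean]
  exact norm_sub_mean_le_of_monotone_of_antitone hmono hz

theorem mean_is_nearest_decreasing_for_lambda_sub_rho
    (n : ℕ) (hn : 1 ≤ n) (lam : EuclideanSpace ℝ (Fin n))
    (hdec : ∀ i j : Fin n, i ≤ j → lam j ≤ lam i)
    (hgap : ∀ i j : Fin n, (i : ℕ) + 1 = (j : ℕ) → lam i - lam j ≤ 1)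
    (m : ℝ) (hm : m = (∑ i, lam i) / n)
    (z : EuclideanSpace ℝ (Fin n)) (hz : ∀ i j : Fin n, i ≤ j → z j ≤ z i) :
    ‖(lam - rhoVec n) - constVec n m‖ ≤ ‖(lam - rhoVec n) - z‖ :=
  mean_is_nearest_decreasing_for_lambda_sub_rho_general n lam hgap m hm z hz
end

section
/- Let n ≥ 1 and let Λ ∈ ℝⁿ be weakly decreasing with Λ_i − Λ_{i+1} ≤ 1 for all 1 ≤ i ≤ n−1, and let m = (Λ₁ + ⋯ + Λ_n)/n be its mean. Then Λ lies in the set m·𝟙 + conv{σ·ρ : σ ∈ S_n}, the translate by the constant vector m·𝟙 of the convex hull of the orbit of the Weyl vector ρ under the symmetric group S_n permuting coordinates. -/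
/-!
Write `x = Λ - m 𝟙`: it has sum zero and consecutive gaps `dᵢ ∈ [0, 1]`. The cyclic rotations
`c_t i = ρ (i - t)` of `ρ` have sum zero, and `c_t` has gap `1` everywhere except at the position
`i` with `i + 1 = t`, where it wraps around with gap `1 - n`. So the convex combination putting
weight `(1 - dᵢ) / n` on `c_{i+1}` and the remaining mass, at least `1 - (n - 1) / n`, on `c_0 = ρ`
has gaps exactly `dᵢ`; since a vector is determined by its sum and its gaps, it equals `x`.
-/

open Finset

theorem Fin.eq_of_sum_eq_of_castSucc_sub_succ_eq {K : Type*} [Field K] [CharZero K] {k : ℕ}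
    {u v : Fin (k + 1) → K} (hsum : ∑ i, u i = ∑ i, v i)
    (hgap : ∀ i : Fin k, u i.castSucc - u i.succ = v i.castSucc - v i.succ) : u = v := by
  have hconst : ∀ i, u i - v i = u 0 - v 0 :=
    Fin.induction rfl fun i ih => by rw [← ih]; linear_combination -(hgap i)
  have hzero : u 0 - v 0 = 0 := by
    have : ((k : K) + 1) * (u 0 - v 0) = 0 :=
      calc ((k : K) + 1) * (u 0 - v 0) = ∑ i, (u i - v i) := by simp [hconst, mul_sub]
        _ = 0 := by rw [sum_sub_distrib, hsum, sub_self]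
    exact (mul_eq_zero.mp this).resolve_left (Nat.cast_add_one_ne_zero k)
  funext i
  linear_combination hconst i + hzero

noncomputable def weylVector (n : ℕ) (i : Fin n) : ℝ := ((n : ℝ) + 1 - 2 * ((i : ℕ) + 1)) / 2

namespace weylVector

variable {n : ℕ}

theorem apply_sub_apply (i j : Fin n) : weylVector n i - weylVector n j = (j : ℝ) - i := by
  simp only [weylVector]; ring

theorem apply_rev (i : Fin n) : weylVector n i.rev = -weylVector n i := by
  simp only [weylVector, Fin.val_rev]
  rw [Nat.cast_sub (by omega)]
  push_cast; ring

theorem sum_eq_zero : ∑ i, weylVector n i = 0 := by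
  have h : ∑ i, weylVector n i = -∑ i, weylVector n i := by
    rw [← sum_neg_distrib, ← Equiv.sum_comp Fin.revPerm]
    simp [apply_rev]
  linarith

end weylVector

noncomputable def weylShift (k : ℕ) (t : Fin (k + 1)) : Fin (k + 1) → ℝ :=
  weylVector (k + 1) ∘ Equiv.subRight t

namespace weylShift

variable {k : ℕ}

theorem mem_orbit (t : Fin (k + 1)) :
    weylShift k t ∈ {w | ∃ σ : Equiv.Perm (Fin (k + 1)), w = weylVector (k + 1) ∘ σ} :=
  ⟨Equiv.subRight t, rfl⟩

theorem sum_eq_zero (t : Fin (k + 1)) : ∑ i, weylShift k t i = 0 :=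
  ((Equiv.subRight t).sum_comp _).trans weylVector.sum_eq_zero

theorem apply_castSucc_sub_apply_succ (t : Fin (k + 1)) (i : Fin k) :
    weylShift k t i.castSucc - weylShift k t i.succ =
      1 - (k + 1) * if t = i.succ then 1 else 0 := by
  have hsucc : i.succ - t = i.castSucc - t + 1 := by rw [← Fin.coeSucc_eq_succ]; abel
  have hlast : i.castSucc - t = Fin.last k ↔ t = i.succ := by
    rw [← add_left_inj 1, ← hsucc, Fin.last_add_one, sub_eq_zero, eq_comm]
  simp only [weylShift, Function.comp_apply, Equiv.subRight_apply, hsucc,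
    weylVector.apply_sub_apply, Fin.val_add_one, ← hlast]
  split_ifs with h
  · simp [h]
  · push_cast; ring

end weylShift

section

variable {k : ℕ} (x : Fin (k + 1) → ℝ)

noncomputable def weylShiftWeight : Fin (k + 1) → ℝ :=
  Fin.cons (1 - ∑ i : Fin k, (1 - (x i.castSucc - x i.succ)) / (k + 1))
    fun i => (1 - (x i.castSucc - x i.succ)) / (k + 1)

theorem sum_weylShiftWeight : ∑ t, weylShiftWeight x t = 1 := by
  simp [weylShiftWeight, Fin.sum_cons]

variable {x}

theorem weylShiftWeight_nonneg (hgap : ∀ i : Fin k, x i.castSucc - x i.succ ∈ Set.Icc 0 1)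
    (t : Fin (k + 1)) : 0 ≤ weylShiftWeight x t := by
  cases t using Fin.cases with
  | zero =>
    have hle : ∑ i : Fin k, (1 - (x i.castSucc - x i.succ)) / (k + 1) ≤ 1 :=
      calc ∑ i : Fin k, (1 - (x i.castSucc - x i.succ)) / (k + 1)
          ≤ ∑ i : Fin k, 1 / ((k : ℝ) + 1) := by
            gcongr with i; linarith [(hgap i).1]
        _ = k / (k + 1) := by simp [div_eq_mul_inv]
        _ ≤ 1 := div_le_one_of_le₀ (by linarith) (by positivity)
    simpa [weylShiftWeight] using hle
  | succ i =>
    exact div_nonneg (by linarith [(hgap i).2]) (by positivity)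

theorem sum_weylShiftWeight_smul_weylShift (hsum : ∑ i, x i = 0) :
    ∑ t, weylShiftWeight x t • weylShift k t = x := by
  apply Fin.eq_of_sum_eq_of_castSucc_sub_succ_eq
  · rw [hsum]
    simp only [Finset.sum_apply, Pi.smul_apply, smul_eq_mul]
    rw [sum_comm]
    simp [← mul_sum, weylShift.sum_eq_zero]
  · intro i
    calc (∑ t, weylShiftWeight x t • weylShift k t) i.castSucc
          - (∑ t, weylShiftWeight x t • weylShift k t) i.succ
        = ∑ t, weylShiftWeight x t * (weylShift k t i.castSucc - weylShift k t i.succ) := by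
          simp [Finset.sum_apply, mul_sub, sum_sub_distrib]
      _ = ∑ t, weylShiftWeight x t - (k + 1) * weylShiftWeight x i.succ := by
          simp [weylShift.apply_castSucc_sub_apply_succ, mul_sub, sum_sub_distrib, mul_comm]
      _ = x i.castSucc - x i.succ := by
          rw [sum_weylShiftWeight]
          simp only [weylShiftWeight, Fin.cons_succ]
          field_simp
          ring

end

theorem mem_convexHull_weylVector_orbit {k : ℕ} {x : Fin (k + 1) → ℝ} (hsum : ∑ i, x i = 0)
    (hgap : ∀ i : Fin k, x i.castSucc - x i.succ ∈ Set.Icc 0 1) :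
    x ∈ convexHull ℝ {w | ∃ σ : Equiv.Perm (Fin (k + 1)), w = weylVector (k + 1) ∘ σ} := by
  rw [← sum_weylShiftWeight_smul_weylShift hsum]
  exact (convex_convexHull ℝ _).sum_mem (fun t _ => weylShiftWeight_nonneg hgap t)
    (sum_weylShiftWeight x) fun t _ => subset_convexHull ℝ _ (weylShift.mem_orbit t)

theorem infinitesimal_character_mem_translated_hull
    (n : ℕ) (hn : 1 ≤ n) (Λ : Fin n → ℝ)
    (hdec : ∀ i j : Fin n, i ≤ j → Λ j ≤ Λ i)
    (hgap : ∀ i j : Fin n, (i : ℕ) + 1 = (j : ℕ) → Λ i - Λ j ≤ 1)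
    (m : ℝ) (hm : m = (∑ i, Λ i) / n) :
    ∃ w ∈ convexHull ℝ
        {w : Fin n → ℝ | ∃ σ : Equiv.Perm (Fin n),
          w = fun i => ((n : ℝ) + 1 - 2 * ((σ i : ℕ) + 1)) / 2},
      Λ = (fun _ => m) + w := by
  obtain ⟨k, rfl⟩ : ∃ k, n = k + 1 := ⟨n - 1, by omega⟩
  refine ⟨Λ - fun _ => m, mem_convexHull_weylVector_orbit ?_ fun i => ⟨?_, ?_⟩,
    (add_sub_cancel _ _).symm⟩
  · simp only [Pi.sub_apply]
    rw [sum_sub_distrib, sum_const, card_univ, Fintype.card_fin, nsmul_eq_mul, hm]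
    field_simp
    ring
  · simpa using hdec _ _ (Fin.castSucc_le_succ i)
  · simpa using hgap i.castSucc i.succ (by simp)
end
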